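/- (Erdős–Gallai) A non-increasing sequence D = (d_1,...,d_n) of nonnegative integers is graphic if and only if Σ_{i=1}^n d_i is even and, for every k ∈ [1,n], Σ_{i=1}^k d_i ≤ k(k−1) + Σ_{i=k+1}^n min(d_i, k). -/

import Mathlib

open Finset

/-- A sequence is graphic if it is the degree sequence of a simple graph. -/
def IsGraphic {n : ℕ} (D : Fin n → ℕ) : Prop :=
  ∃ (G : SimpleGraph (Fin n)) (_ : DecidableRel G.Adj), ∀ i, G.degree i = D i

/-- The levelling operation: decrement entry `α` by 1, increment entry `β` by 1. -/
def lvl {n : ℕ} (D : Fin n → ℕ) (α β : Fin n) : Fin n → ℕ :=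
  fun i => if i = α then D α - 1 else if i = β then D β + 1 else D i

/-- The spread `φ(D) = ∑_{r<s} |d_r - d_s|`. -/
def spread {n : ℕ} (D : Fin n → ℕ) : ℤ :=
  ∑ r : Fin n, ∑ s : Fin n, if r < s then |(D r : ℤ) - (D s : ℤ)| else 0

/-- `A ≤ D ≤ B` coordinatewise. -/
def Between {n : ℕ} (A D B : Fin n → ℕ) : Prop := ∀ i, A i ≤ D i ∧ D i ≤ B i

/-- Volume of `D` w.r.t. lower boundary `A`. -/
def vol {n : ℕ} (A D : Fin n → ℕ) : ℕ := ∑ i, (D i - A i)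

/-- An interval sequence `(A,B)` is realizable if it contains a graphic sequence. -/
def Realizable {n : ℕ} (A B : Fin n → ℕ) : Prop := ∃ D, IsGraphic D ∧ Between A D B

/-- Two sequences are similar if one is a permutation of the other. -/
def SeqSimilar {n : ℕ} (D D' : Fin n → ℕ) : Prop :=
  ∃ σ : Equiv.Perm (Fin n), ∀ i, D' i = D (σ i)

/-- `D` is levelled w.r.t. `(A,B)`: it lies in `[A,B]` and no levelling operation staying
within `[A,B]` strictly decreases its spread. -/
def IsLevelled {n : ℕ} (A B D : Fin n → ℕ) : Prop :=
  Between A D B ∧ ∀ α β : Fin n, α ≠ β → D β < D α → Between A (lvl D α β) B →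
    spread D ≤ spread (lvl D α β)

/-- One levelling step from `D` to `D'` staying within `[A,B]`. -/
def LvlStep {n : ℕ} (A B D D' : Fin n → ℕ) : Prop :=
  ∃ α β : Fin n, α ≠ β ∧ D β < D α ∧ D' = lvl D α β ∧ Between A D' B

/-- `F(ℓ,S) = ∑_i (min(ℓ,b_i) - min(ℓ,a_i))`. -/
noncomputable def Fvol {n : ℕ} (A B : Fin n → ℕ) (ℓ : ℝ) : ℝ :=
  ∑ i, (min ℓ (B i : ℝ) - min ℓ (A i : ℝ))

/-- Upper deviation `δ_U(D,S) = ∑_i max(0, d_i - b_i)` (truncated subtraction). -/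
def devU {n : ℕ} (D B : Fin n → ℕ) : ℕ := ∑ i, (D i - B i)

/-- Lower deviation `δ_L(D,S) = ∑_i max(0, a_i - d_i)` (truncated subtraction). -/
def devL {n : ℕ} (D A : Fin n → ℕ) : ℕ := ∑ i, (A i - D i)

/-- `R` lies in `[B,⊤]`, `(A,R)` is realizable, and `∑ (r_i - b_i)` is minimum. -/
def MinUpper {n : ℕ} (A B R : Fin n → ℕ) : Prop :=
  (∀ i, B i ≤ R i ∧ R i ≤ n - 1) ∧ Realizable A R ∧
  ∀ R' : Fin n → ℕ, (∀ i, B i ≤ R' i ∧ R' i ≤ n - 1) → Realizable A R' →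
    ∑ i, (R i - B i) ≤ ∑ i, (R' i - B i)

/-!
Necessity is double counting: the degrees of the first `k` vertices are absorbed by at most
`k(k-1)` edge ends among themselves and, for each later vertex `w`, by at most `min(d_w, k)`
edges to `w`.

Sufficiency is Choudum's induction on `∑ dᵢ`. Let `b` be the last index with `d_b > 0` and `a < b`
the last index of the initial block of maximal entries (or `b - 1` if that block reaches `b`).
Lowering `d_a` and `d_b` by one keeps the sequence non-increasing and keeps every Erdős–Gallai
inequality; for `k ≤ a` this needs a case analysis, in which one case follows from the inequality
at `k + 1` and another from the parity of `∑ dᵢ`. In a realization of the lowered sequence add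
the edge `ab`. If it is already there, the inequality at `k = 1` gives `d_a ≤ b`, so some `u ≤ b`
lies outside the closed neighbourhood of `a`; as `deg u > deg b`, `u` has a neighbour `v` not
adjacent to `b`, and replacing the edge `uv` by `au` and `bv` does the job.
-/

namespace SimpleGraph

variable {V : Type*} [Fintype V]

theorem degree_sup_of_disjoint {G H : SimpleGraph V} [DecidableRel G.Adj] [DecidableRel H.Adj]
    (h : Disjoint G H) (v : V) : (G ⊔ H).degree v = G.degree v + H.degree v := by
  simp only [← card_neighborFinset_eq_degree, neighborFinset_sup_of_disjoint v h, card_disjUnion]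

variable [DecidableEq V]

theorem degree_edge {s t : V} (hst : s ≠ t) (v : V) :
    (edge s t).degree v = (if v = s then 1 else 0) + (if v = t then 1 else 0) := by
  rw [← card_neighborFinset_eq_degree]
  by_cases hs : v = s
  · subst hs
    have : (edge v t).neighborFinset v = {t} := by
      ext w; simp only [mem_neighborFinset, edge_adj, mem_singleton]; grind
    simp [this, hst]
  by_cases ht : v = t
  · subst ht
    have : (edge s v).neighborFinset v = {s} := by
      ext w; simp only [mem_neighborFinset, edge_adj, mem_singleton]; grind
    simp [this, hs]
  · have : (edge s t).neighborFinset v = ∅ := by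
      ext w; simp [edge_adj, hs, ht]
    simp [this, hs, ht]

theorem degree_sup_edge {G : SimpleGraph V} [DecidableRel G.Adj] {s t : V} (hst : s ≠ t)
    (hn : ¬G.Adj s t) (v : V) :
    (G ⊔ edge s t).degree v = G.degree v + (if v = s then 1 else 0) + (if v = t then 1 else 0) := by
  rw [degree_sup_of_disjoint ((disjoint_edge G).mpr hn), degree_edge hst, add_assoc]

theorem degree_sdiff_edge {G : SimpleGraph V} [DecidableRel G.Adj] {s t : V} (h : G.Adj s t)
    (v : V) :
    (G \ edge s t).degree v + (if v = s then 1 else 0) + (if v = t then 1 else 0) = G.degree v := by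
  rw [← degree_sup_edge h.ne (by simp [sdiff_adj, edge_adj, h.ne])]
  congr! 1
  exact sdiff_sup_cancel ((edge_le_iff G).mpr (Or.inr h))

theorem degree_le_degree_of_forall_adj {G : SimpleGraph V} [DecidableRel G.Adj] {u b : V}
    (h : ∀ v, G.Adj u v → v = b ∨ G.Adj b v) : G.degree u ≤ G.degree b := by
  rw [← card_neighborFinset_eq_degree, ← card_neighborFinset_eq_degree]
  refine card_le_card_of_injOn (Equiv.swap b u) (fun v hv => ?_) (Equiv.swap b u).injective.injOn
  rw [mem_coe, mem_neighborFinset] at hv ⊢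
  rcases h v hv with rfl | hbv
  · simpa using hv.symm
  · rwa [Equiv.swap_apply_of_ne_of_ne hbv.ne' hv.ne']

theorem exists_adj_not_adj_of_degree_lt {G : SimpleGraph V} [DecidableRel G.Adj] {u b : V}
    (h : G.degree b < G.degree u) : ∃ v, G.Adj u v ∧ v ≠ b ∧ ¬G.Adj b v := by
  by_contra! h'
  exact h.not_ge (degree_le_degree_of_forall_adj fun v hv => or_iff_not_imp_left.mpr (h' v hv))

theorem exists_degree_eq_add_edge {G : SimpleGraph V} [DecidableRel G.Adj] {a b : V}
    (hab : a ≠ b) (hswitch : G.Adj a b → ∃ u, u ≠ a ∧ ¬G.Adj a u ∧ G.degree b < G.degree u) :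
    ∃ (H : SimpleGraph V) (_ : DecidableRel H.Adj), ∀ i,
      H.degree i = G.degree i + (if i = a then 1 else 0) + (if i = b then 1 else 0) := by
  by_cases hadj : G.Adj a b
  · obtain ⟨u, hua, hau, hdeg⟩ := hswitch hadj
    obtain ⟨v, huv, hvb, hbv⟩ := exists_adj_not_adj_of_degree_lt hdeg
    have hub : u ≠ b := by rintro rfl; exact hau hadj
    have hau' : ¬(G \ edge u v).Adj a u := fun h => hau h.1
    have hbv' : ¬(G \ edge u v ⊔ edge a u).Adj b v := by
      simp only [sup_adj, sdiff_adj, edge_adj]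
      grind
    refine ⟨G \ edge u v ⊔ edge a u ⊔ edge b v, inferInstance, fun i => ?_⟩
    rw [degree_sup_edge hvb.symm hbv', degree_sup_edge hua.symm hau', ← degree_sdiff_edge huv i]
    split_ifs <;> omega
  · exact ⟨G ⊔ edge a b, inferInstance, degree_sup_edge hab hadj⟩

theorem sum_degree_le_mul_add_sum_min (G : SimpleGraph V) [DecidableRel G.Adj] (s : Finset V) :
    ∑ v ∈ s, G.degree v ≤ #s * (#s - 1) + ∑ w ∈ sᶜ, min (G.degree w) #s := by
  have hsplit : ∀ v, G.degree v = #(s.bipartiteAbove G.Adj v) + #(sᶜ.bipartiteAbove G.Adj v) := by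
    intro v
    rw [bipartiteAbove, bipartiteAbove, ← card_union_of_disjoint
      (disjoint_filter_filter (disjoint_compl_right : Disjoint s sᶜ)), ← filter_union, union_compl,
      ← card_neighborFinset_eq_degree, neighborFinset_eq_filter]
  have hinside : ∀ v ∈ s, #(s.bipartiteAbove G.Adj v) ≤ #s - 1 := fun v hv => by
    rw [← card_erase_of_mem hv]
    exact card_le_card fun w hw => by
      rw [mem_bipartiteAbove] at hw
      exact mem_erase.mpr ⟨hw.2.ne', hw.1⟩
  have houtside : ∀ w ∈ sᶜ, #(s.bipartiteBelow G.Adj w) ≤ min (G.degree w) #s := fun w _ =>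
    le_min (by
      rw [← card_neighborFinset_eq_degree]
      exact card_le_card fun v hv => by
        rw [mem_bipartiteBelow] at hv
        exact (mem_neighborFinset _ _ _).mpr hv.2.symm)
      (card_le_card (filter_subset _ _))
  calc ∑ v ∈ s, G.degree v
      = ∑ v ∈ s, #(s.bipartiteAbove G.Adj v) + ∑ v ∈ s, #(sᶜ.bipartiteAbove G.Adj v) := by
        rw [← sum_add_distrib]; exact sum_congr rfl fun v _ => hsplit v
    _ = ∑ v ∈ s, #(s.bipartiteAbove G.Adj v) + ∑ w ∈ sᶜ, #(s.bipartiteBelow G.Adj w) := by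
        rw [sum_card_bipartiteAbove_eq_sum_card_bipartiteBelow G.Adj (t := sᶜ)]
    _ ≤ #s * (#s - 1) + ∑ w ∈ sᶜ, min (G.degree w) #s :=
        add_le_add ((sum_le_card_nsmul _ _ _ hinside).trans_eq (smul_eq_mul _ _))
          (sum_le_sum houtside)

end SimpleGraph

theorem Fin.sum_filter_val_lt {M : Type*} [AddCommMonoid M] {n k : ℕ} (F : ℕ → M)
    (hkn : k ≤ n) : ∑ i ∈ univ.filter (fun i : Fin n => (i : ℕ) < k), F i = ∑ i ∈ range k, F i := by
  rw [sum_filter, Fin.sum_univ_eq_sum_range (fun i => if i < k then F i else 0), ← sum_filter]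
  congr 1
  ext; simp only [mem_filter, mem_range]; omega

theorem Fin.sum_filter_le_val {M : Type*} [AddCommMonoid M] {n : ℕ} (k : ℕ) (F : ℕ → M) :
    ∑ i ∈ univ.filter (fun i : Fin n => k ≤ (i : ℕ)), F i = ∑ i ∈ Ico k n, F i := by
  rw [sum_filter, Fin.sum_univ_eq_sum_range (fun i => if k ≤ i then F i else 0), ← sum_filter]
  congr 1
  ext; simp only [mem_filter, mem_range, mem_Ico]; omega

theorem Fin.extend_val_eq_zero {n j : ℕ} {D : Fin n → ℕ} (hj : n ≤ j) :
    Function.extend Fin.val D 0 j = 0 :=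
  Function.extend_apply' _ _ _ fun ⟨i, hi⟩ => by omega

theorem Fin.antitone_extend_val {n : ℕ} {D : Fin n → ℕ} (hD : Antitone D) :
    Antitone (Function.extend Fin.val D 0) := fun i j hij => by
  rcases lt_or_ge j n with hj | hj
  · exact (Fin.val_injective.extend_apply D 0 ⟨j, hj⟩).trans_le
      ((hD (show (⟨i, by omega⟩ : Fin n) ≤ ⟨j, hj⟩ from hij)).trans
        (Fin.val_injective.extend_apply D 0 ⟨i, _⟩).ge)
  · rw [Fin.extend_val_eq_zero hj]; exact Nat.zero_le _

theorem mul_le_of_succ_mul_le {k c r s : ℕ} (hkr : k + 1 ≤ r)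
    (h : (k + 1) * c ≤ (k + 1) * k + ((r - (k + 1)) * (k + 1) + (s + 1))) :
    k * c ≤ k * (k - 1) + ((r - k) * k + s) := by
  obtain ⟨d, rfl⟩ := Nat.exists_eq_add_of_le hkr
  rcases k with _ | k
  · simp
  simp only [Nat.add_sub_cancel_left, Nat.add_sub_cancel,
    show k + 1 + 1 + d - (k + 1) = d + 1 by omega] at h ⊢
  nlinarith

theorem mul_le_mul_pred_add {k c : ℕ} (h : c ≤ k) : k * c ≤ k * (k - 1) + c := by
  rcases k with _ | k
  · simp
  simp only [Nat.add_sub_cancel]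
  nlinarith

/-- The sequence `d₁, …, dₙ` is `f 0, …, f (n - 1)`. -/
def ErdosGallaiAt (f : ℕ → ℕ) (n k : ℕ) : Prop :=
  ∑ i ∈ range k, f i ≤ k * (k - 1) + ∑ i ∈ Ico k n, min (f i) k

def ErdosGallai (f : ℕ → ℕ) (n : ℕ) : Prop := ∀ k ≤ n, ErdosGallaiAt f n k

section Inequalities

variable {f : ℕ → ℕ} {n k r : ℕ}

theorem mul_le_sum_Ico_min (hrn : r ≤ n) (hge : ∀ i ∈ Ico k r, k ≤ f i) :
    (r - k) * k ≤ ∑ i ∈ Ico k n, min (f i) k :=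
  calc (r - k) * k = ∑ i ∈ Ico k r, min (f i) k := by
        rw [sum_congr rfl fun i hi => min_eq_right (hge i hi), sum_const, Nat.card_Ico,
          smul_eq_mul]
    _ ≤ ∑ i ∈ Ico k n, min (f i) k := sum_le_sum_of_subset (Ico_subset_Ico_right hrn)

theorem sum_Ico_min_eq (hkr : k ≤ r) (hrn : r ≤ n) (hge : ∀ i ∈ Ico k r, k ≤ f i)
    (hle : ∀ i ∈ Ico r n, f i ≤ k) :
    ∑ i ∈ Ico k n, min (f i) k = (r - k) * k + ∑ i ∈ Ico r n, f i := by
  rw [← sum_Ico_consecutive _ hkr hrn, sum_congr rfl fun i hi => min_eq_right (hge i hi),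
    sum_congr rfl fun i hi => min_eq_left (hle i hi), sum_const, Nat.card_Ico, smul_eq_mul]

theorem erdosGallaiAt_of_le_of_ge {b : ℕ} (hbn : b < n) (hle : ∀ i < k, f i ≤ b)
    (hge : ∀ i ∈ Ico k (b + 1), k ≤ f i) : ErdosGallaiAt f n k :=
  calc ∑ i ∈ range k, f i ≤ k * b := by
        simpa using sum_le_card_nsmul (range k) f b fun i hi => hle i (mem_range.mp hi)
    _ ≤ k * ((k - 1) + (b + 1 - k)) := Nat.mul_le_mul_left k (by omega)
    _ = k * (k - 1) + (b + 1 - k) * k := by ring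
    _ ≤ k * (k - 1) + ∑ i ∈ Ico k n, min (f i) k := by grw [mul_le_sum_Ico_min hbn hge]

theorem erdosGallaiAt_of_even_of_le_succ (hkn : k ≤ n) (heven : Even (∑ i ∈ range n, f i))
    (hle : ∀ i ∈ Ico k n, f i ≤ k)
    (h : ∑ i ∈ range k, f i ≤ k * (k - 1) + ∑ i ∈ Ico k n, f i + 1) : ErdosGallaiAt f n k := by
  have htail : ∑ i ∈ Ico k n, min (f i) k = ∑ i ∈ Ico k n, f i := by
    simpa using sum_Ico_min_eq le_rfl hkn (by simp) hle
  have hsum := sum_range_add_sum_Ico f hkn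
  obtain ⟨x, hx⟩ := heven
  obtain ⟨y, hy⟩ := Nat.even_mul_pred_self k
  rw [ErdosGallaiAt, htail]
  omega

theorem sum_range_eq_mul_of_le {a : ℕ} (hconst : ∀ i ≤ a, f i = f 0) (hka : k ≤ a + 1) :
    ∑ i ∈ range k, f i = k * f 0 := by
  rw [sum_congr rfl fun i hi => hconst i (by grind), sum_const, card_range, smul_eq_mul]

end Inequalities

section Reduction

variable {f g : ℕ → ℕ} {a b n k : ℕ}

theorem le_of_eq_add_ite
    (hfg : ∀ i, f i = g i + (if i = a then 1 else 0) + (if i = b then 1 else 0)) (i : ℕ) :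
    g i ≤ f i := by
  rw [hfg i]; omega

theorem le_succ_of_eq_add_ite
    (hfg : ∀ i, f i = g i + (if i = a then 1 else 0) + (if i = b then 1 else 0)) (hab : a ≠ b)
    (i : ℕ) : f i ≤ g i + 1 := by
  rw [hfg i]; split_ifs <;> omega

theorem sum_eq_sum_add_ite
    (hfg : ∀ i, f i = g i + (if i = a then 1 else 0) + (if i = b then 1 else 0))
    (s : Finset ℕ) :
    ∑ i ∈ s, f i = ∑ i ∈ s, g i + (if a ∈ s then 1 else 0) + (if b ∈ s then 1 else 0) := by
  simp_rw [hfg, sum_add_distrib, sum_ite_eq']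

theorem sum_min_le_sum_min_add_ite
    (hfg : ∀ i, f i = g i + (if i = a then 1 else 0) + (if i = b then 1 else 0))
    (s : Finset ℕ) (k : ℕ) :
    ∑ i ∈ s, min (f i) k ≤
      ∑ i ∈ s, min (g i) k + (if a ∈ s then 1 else 0) + (if b ∈ s then 1 else 0) :=
  calc ∑ i ∈ s, min (f i) k
      ≤ ∑ i ∈ s, (min (g i) k + (if i = a then 1 else 0) + (if i = b then 1 else 0)) :=
        sum_le_sum fun i _ => by rw [hfg i]; split_ifs <;> omega
    _ = _ := by simp_rw [sum_add_distrib, sum_ite_eq']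

theorem antitone_of_eq_add_ite (hf : Antitone f)
    (hfg : ∀ i, f i = g i + (if i = a then 1 else 0) + (if i = b then 1 else 0))
    (hab : a ≠ b) (ha : g (a + 1) < f a) (hb : g (b + 1) < f b) : Antitone g := by
  refine antitone_nat_of_succ_le fun i => ?_
  have hi := hfg i
  have hi1 := le_of_eq_add_ite hfg (i + 1)
  have hmono := hf (show i ≤ i + 1 by omega)
  by_cases hia : i = a
  · subst hia
    split_ifs at hi <;> omega
  by_cases hib : i = b
  · subst hib
    split_ifs at hi <;> omega
  · rw [if_neg hia, if_neg hib] at hi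
    omega

theorem erdosGallaiAt_of_lt
    (hfg : ∀ i, f i = g i + (if i = a then 1 else 0) + (if i = b then 1 else 0))
    (hak : a < k) (h : ErdosGallaiAt f n k) : ErdosGallaiAt g n k := by
  have hL := sum_eq_sum_add_ite hfg (range k)
  have hT := sum_min_le_sum_min_add_ite hfg (Ico k n) k
  simp only [mem_range, mem_Ico] at hL hT
  unfold ErdosGallaiAt at h ⊢
  split_ifs at hL hT <;> omega

theorem erdosGallaiAt_of_erdosGallaiAt_succ (hf : Antitone f)
    (hfg : ∀ i, f i = g i + (if i = a then 1 else 0) + (if i = b then 1 else 0))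
    (hconst : ∀ i ≤ a, f i = f 0) (hab : a < b) (hbn : b < n) (hka : k ≤ a) (hbk : f b ≤ k)
    (hkc : k < f 0) (h : ErdosGallaiAt f n (k + 1)) : ErdosGallaiAt g n k := by
  have hex : ∃ i, f i ≤ k := ⟨b, hbk⟩
  obtain ⟨r, hrb, hgt, hle⟩ : ∃ r ≤ b, (∀ i < r, k < f i) ∧ ∀ i, r ≤ i → f i ≤ k :=
    ⟨Nat.find hex, Nat.find_min' hex hbk, fun i hi => not_le.mp (Nat.find_min hex hi),
      fun i hi => (hf hi).trans (Nat.find_spec hex)⟩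
  have har : a < r := by
    by_contra! hra
    have := hle a hra
    rw [hconst a le_rfl] at this
    omega
  have hLf := sum_range_eq_mul_of_le hconst (k := k + 1) (by omega)
  have hLg := sum_eq_sum_add_ite hfg (range k)
  have hSg := sum_eq_sum_add_ite hfg (Ico r n)
  have hTg := sum_Ico_min_eq (f := g) (n := n) (k := k) (r := r) (by omega) (by omega)
    (fun i hi => by
      have := hgt i (mem_Ico.mp hi).2
      have := le_succ_of_eq_add_ite hfg hab.ne i
      omega)
    (fun i hi => (le_of_eq_add_ite hfg i).trans (hle i (mem_Ico.mp hi).1))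
  have hTf := sum_Ico_min_eq (f := f) (n := n) (k := k + 1) (r := r) (by omega) (by omega)
    (fun i hi => hgt i (mem_Ico.mp hi).2) (fun i hi => (hle i (mem_Ico.mp hi).1).trans k.le_succ)
  simp only [mem_range, mem_Ico] at hLg hSg
  rw [if_neg (by omega), if_pos (by omega), add_zero] at hSg
  rw [if_neg (by omega), if_neg (by omega), add_zero, add_zero,
    sum_range_eq_mul_of_le hconst (by omega)] at hLg
  unfold ErdosGallaiAt at h ⊢
  rw [hLf, hTf, hSg] at h
  rw [← hLg, hTg]
  exact mul_le_of_succ_mul_le (by omega) h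

theorem erdosGallaiAt_of_max_le (hf : Antitone f)
    (hfg : ∀ i, f i = g i + (if i = a then 1 else 0) + (if i = b then 1 else 0))
    (hconst : ∀ i ≤ a, f i = f 0) (hab : a < b) (hbn : b < n) (hb : 0 < f b)
    (heven : Even (∑ i ∈ range n, f i)) (hka : k ≤ a) (hck : f 0 ≤ k) :
    ErdosGallaiAt g n k := by
  have hS := sum_eq_sum_add_ite hfg (range n)
  have hL := sum_eq_sum_add_ite hfg (range k)
  have hT := sum_eq_sum_add_ite hfg (Ico k n)
  simp only [mem_range, mem_Ico] at hS hL hT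
  rw [if_pos (by omega), if_pos (by omega)] at hS hT
  rw [if_neg (by omega), if_neg (by omega), sum_range_eq_mul_of_le hconst (by omega)] at hL
  have hpair : f k + f b ≤ ∑ i ∈ Ico k n, f i := by
    rw [← sum_pair (show k ≠ b by omega)]
    exact sum_le_sum_of_subset fun i => by simp only [mem_insert, mem_singleton, mem_Ico]; omega
  rw [hconst k hka] at hpair
  refine erdosGallaiAt_of_even_of_le_succ (by omega) ?_
    (fun i _ => (le_of_eq_add_ite hfg i).trans ((hf i.zero_le).trans hck)) ?_
  · obtain ⟨x, hx⟩ := heven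
    exact ⟨x - 1, by omega⟩
  · have := mul_le_mul_pred_add hck
    omega

theorem exists_choudum_pair (hf : Antitone f) (hzero : ∀ i, n ≤ i → f i = 0) (hpos : 0 < f 0)
    (hEG : ErdosGallai f n) :
    ∃ a b, a < b ∧ b < n ∧ f 0 ≤ b ∧ 0 < f b ∧ (∀ i, b < i → f i = 0) ∧
      (∀ i ≤ a, f i = f 0) ∧ (a + 1 = b ∨ f (a + 1) < f 0) := by
  obtain ⟨b, hbn, hb, hzero_b⟩ : ∃ b < n, 0 < f b ∧ ∀ i, b < i → f i = 0 := by
    have hb : 0 < f (Nat.findGreatest (0 < f ·) n) := Nat.findGreatest_spec (P := (0 < f ·)) (Nat.zero_le n) hpos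
    refine ⟨_, (Nat.findGreatest_le n).lt_of_ne fun h => ?_, hb, fun i hi => ?_⟩
    · rw [h, hzero n le_rfl] at hb
      exact hb.false
    · rcases le_or_gt i n with hin | hin
      · exact Nat.eq_zero_of_not_pos (Nat.findGreatest_is_greatest (P := (0 < f ·)) hi hin)
      · exact hzero i hin.le
  have hcb : f 0 ≤ b := by
    have h1 := hEG 1 (by omega)
    rw [ErdosGallaiAt, sum_Ico_min_eq (r := b + 1) (by omega) hbn
      (fun i hi => by have := hf (show i ≤ b by grind); omega)
      (fun i hi => (hzero_b i (mem_Ico.mp hi).1).trans_le zero_le_one),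
      sum_congr rfl fun i hi => hzero_b i (mem_Ico.mp hi).1] at h1
    simpa using h1
  have hdrop : ∃ i, f i < f 0 := ⟨b + 1, by rw [hzero_b _ (by omega)]; exact hpos⟩
  obtain ⟨t, ht, htb, hbefore⟩ : ∃ t, f t < f 0 ∧ t ≤ b + 1 ∧ ∀ i < t, f i = f 0 :=
    ⟨Nat.find hdrop, Nat.find_spec hdrop,
      Nat.find_min' hdrop (by rw [hzero_b _ (by omega)]; exact hpos),
      fun i hi => le_antisymm (hf i.zero_le) (not_lt.mp (Nat.find_min hdrop hi))⟩
  have ht0 : t ≠ 0 := by rintro rfl; exact ht.ne rfl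
  refine ⟨min (t - 1) (b - 1), b, by omega, hbn, hcb, hb, hzero_b,
    fun i hi => hbefore i (by omega), ?_⟩
  rcases le_total (t - 1) (b - 1) with h | h
  · right; rwa [min_eq_left h, Nat.sub_add_cancel (by omega)]
  · left; omega

theorem exists_erdosGallai_reduction (hf : Antitone f) (hzero : ∀ i, n ≤ i → f i = 0)
    (heven : Even (∑ i ∈ range n, f i)) (hEG : ErdosGallai f n) (hpos : 0 < f 0) :
    ∃ a b g, a < b ∧ b < n ∧ f a ≤ b ∧
      (∀ i, f i = g i + (if i = a then 1 else 0) + (if i = b then 1 else 0)) ∧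
      Antitone g ∧ ErdosGallai g n := by
  obtain ⟨a, b, hab, hbn, hcb, hb, hzero_b, hconst, hdrop⟩ :=
    exists_choudum_pair hf hzero hpos hEG
  obtain ⟨g, hfg⟩ : ∃ g : ℕ → ℕ,
      ∀ i, f i = g i + (if i = a then 1 else 0) + (if i = b then 1 else 0) := by
    refine ⟨fun i => f i - (if i = a then 1 else 0) - (if i = b then 1 else 0), fun i => ?_⟩
    have ha : 0 < f a := by rw [hconst a le_rfl]; exact hpos
    dsimp only
    split_ifs <;> subst_vars <;> omega
  have hg : Antitone g := by
    refine antitone_of_eq_add_ite hf hfg hab.ne ?_ ?_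
    · rcases hdrop with hab' | hdrop
      · have hgb : g b + 1 = f b := by rw [hfg b, if_neg hab.ne', if_pos rfl, add_zero]
        have := hf hab.le
        rw [hab']
        omega
      · rw [hconst a le_rfl]
        exact (le_of_eq_add_ite hfg (a + 1)).trans_lt hdrop
    · exact ((le_of_eq_add_ite hfg (b + 1)).trans (hzero_b (b + 1) (by omega)).le).trans_lt hb
  refine ⟨a, b, g, hab, hbn, by rw [hconst a le_rfl]; omega, hfg, hg, fun k hkn => ?_⟩
  rcases lt_or_ge a k with hak | hka
  · exact erdosGallaiAt_of_lt hfg hak (hEG k hkn)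
  by_cases hbk : k + 1 ≤ f b
  · refine erdosGallaiAt_of_le_of_ge hbn
      (fun i _ => (le_of_eq_add_ite hfg i).trans ((hf i.zero_le).trans hcb)) fun i hi => ?_
    have := hf (show i ≤ b by grind)
    have := le_succ_of_eq_add_ite hfg hab.ne i
    omega
  by_cases hkc : k < f 0
  · exact erdosGallaiAt_of_erdosGallaiAt_succ hf hfg hconst hab hbn hka (by omega) hkc
      (hEG (k + 1) (by omega))
  · exact erdosGallaiAt_of_max_le hf hfg hconst hab hbn hb heven hka (by omega)

end Reduction

theorem exists_switch_vertex {n : ℕ} {f g : ℕ → ℕ} {a b : Fin n} (hf : Antitone f)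
    (hfg : ∀ i, f i = g i + (if i = a then 1 else 0) + (if i = b then 1 else 0)) (hab : a ≠ b)
    (hfab : f a ≤ b) {G : SimpleGraph (Fin n)} [DecidableRel G.Adj]
    (hG : ∀ i, G.degree i = g i) (hadj : G.Adj a b) :
    ∃ u, u ≠ a ∧ ¬G.Adj a u ∧ G.degree b < G.degree u := by
  -- the closed neighbourhood of `a` has `f a ≤ b` elements, so it misses some `u ≤ b`
  have hcard : #(insert a (G.neighborFinset a)) < #(Iic b) := by
    grw [Fin.card_Iic, card_insert_le, G.card_neighborFinset_eq_degree, hG]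
    have := hfg a
    rw [if_pos rfl, if_neg (Fin.val_ne_of_ne hab)] at this
    omega
  obtain ⟨u, hub, hu⟩ := exists_mem_notMem_of_card_lt_card hcard
  rw [mem_insert, not_or, SimpleGraph.mem_neighborFinset] at hu
  obtain ⟨hua, hau⟩ := hu
  have hub' : u ≠ b := by rintro rfl; exact hau hadj
  refine ⟨u, hua, hau, ?_⟩
  rw [hG, hG]
  have hfu : f b ≤ f u := hf (show u ≤ b from mem_Iic.mp hub)
  have hb := hfg b
  have hu := hfg u
  have := Fin.val_ne_of_ne hua
  have := Fin.val_ne_of_ne hub'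
  have := Fin.val_ne_of_ne hab
  split_ifs at hb hu <;> omega

theorem exists_graph_of_erdosGallai {n : ℕ} {f : ℕ → ℕ} (hf : Antitone f)
    (hzero : ∀ i, n ≤ i → f i = 0) (heven : Even (∑ i ∈ range n, f i)) (hEG : ErdosGallai f n) :
    ∃ (G : SimpleGraph (Fin n)) (_ : DecidableRel G.Adj), ∀ i, G.degree i = f i := by
  induction hs : ∑ i ∈ range n, f i using Nat.strong_induction_on generalizing f with
  | _ s ih =>
  rcases Nat.eq_zero_or_pos (f 0) with h0 | hpos
  · exact ⟨⊥, inferInstance, fun i => by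
      simp [Nat.eq_zero_of_le_zero ((hf i.1.zero_le).trans h0.le)]⟩
  obtain ⟨a, b, g, hab, hbn, hfab, hfg, hg, hgEG⟩ :=
    exists_erdosGallai_reduction hf hzero heven hEG hpos
  have hsum := sum_eq_sum_add_ite hfg (range n)
  rw [if_pos (mem_range.mpr (hab.trans hbn)), if_pos (mem_range.mpr hbn)] at hsum
  obtain ⟨G, _, hG⟩ := ih _ (by omega) hg
    (fun i hi => Nat.eq_zero_of_le_zero ((le_of_eq_add_ite hfg i).trans (hzero i hi).le))
    (by obtain ⟨x, hx⟩ := heven; exact ⟨x - 1, by omega⟩) hgEG rfl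
  set aF : Fin n := ⟨a, hab.trans hbn⟩
  set bF : Fin n := ⟨b, hbn⟩
  have hne : aF ≠ bF := Fin.ne_of_val_ne hab.ne
  obtain ⟨H, _, hH⟩ := G.exists_degree_eq_add_edge hne
    (exists_switch_vertex (a := aF) (b := bF) hf hfg hne hfab hG)
  exact ⟨H, inferInstance, fun i => by rw [hH, hG, hfg i]; simp [aF, bF, Fin.ext_iff]⟩

theorem stmt_16 {n : ℕ} (D : Fin n → ℕ)
    (hmono : ∀ j k : Fin n, j ≤ k → D k ≤ D j) :
    IsGraphic D ↔
      (Even (∑ i, D i) ∧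
       ∀ k : ℕ, 1 ≤ k → k ≤ n →
         ∑ i ∈ Finset.univ.filter (fun i : Fin n => (i : ℕ) < k), D i ≤
           k * (k - 1) +
             ∑ i ∈ Finset.univ.filter (fun i : Fin n => k ≤ (i : ℕ)), min (D i) k) := by
  constructor
  · rintro ⟨G, _, hG⟩
    refine ⟨by simp_rw [← hG, G.sum_degrees_eq_twice_card_edges, even_two_mul], fun k _ hkn => ?_⟩
    have := G.sum_degree_le_mul_add_sum_min (univ.filter fun i : Fin n => (i : ℕ) < k)
    rw [Fin.card_filter_val_lt, min_eq_right hkn, compl_filter] at this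
    simpa [hG, not_lt] using this
  · rintro ⟨heven, hEG⟩
    set f : ℕ → ℕ := Function.extend Fin.val D 0
    have hfD : ∀ i : Fin n, f i = D i := Fin.val_injective.extend_apply D 0
    simp_rw [← hfD] at heven hEG
    rw [Fin.sum_univ_eq_sum_range f] at heven
    obtain ⟨G, _, hG⟩ := exists_graph_of_erdosGallai (Fin.antitone_extend_val fun j k => hmono j k)
      (fun _ => Fin.extend_val_eq_zero) heven fun k hkn => by
      rcases Nat.eq_zero_or_pos k with rfl | hk
      · simp [ErdosGallaiAt]
      have := hEG k hk hkn
      rwa [Fin.sum_filter_val_lt f hkn, Fin.sum_filter_le_val k (fun i => min (f i) k)] at this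
    exact ⟨G, inferInstance, fun i => (hG i).trans (hfD i)⟩
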